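/- For a pure state ρ = |ψ⟩⟨ψ| and a state σ (with σ invertible on the support containing |ψ⟩), the geometric relative entropy and the max-relative entropy coincide: D̂(ρ‖σ) = D_max(ρ‖σ) = log ⟨ψ| σ^{−1} |ψ⟩. -/

import Mathlib

open Matrix
open scoped Kronecker ComplexOrder
attribute [local instance] Classical.propDecidable

noncomputable section

variable {d dA dB : Type*} [Fintype d] [DecidableEq d]
  [Fintype dA] [DecidableEq dA] [Fintype dB] [DecidableEq dB]

def cfcM (f : ℝ → ℝ) (A : Matrix d d ℂ) : Matrix d d ℂ :=
  if h : A.IsHermitian then h.cfc f else 0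

def mpow (A : Matrix d d ℂ) (α : ℝ) : Matrix d d ℂ := cfcM (fun x => x ^ α) A

def trR (A : Matrix d d ℂ) : ℝ := (A.trace).re

def MLE (A B : Matrix d d ℂ) : Prop := (B - A).PosSemidef

def suppLE (P Q : Matrix d d ℂ) : Prop := ∀ v, Q.mulVec v = 0 → P.mulVec v = 0

def IsState (ρ : Matrix d d ℂ) : Prop := ρ.PosSemidef ∧ trR ρ = 1

def SubState (ρ : Matrix d d ℂ) : Prop := ρ.PosSemidef ∧ trR ρ ≤ 1

def relEnt (P Q : Matrix d d ℂ) : EReal :=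
  if suppLE P Q then
    ((trR (P * (cfcM (Real.logb 2) P - cfcM (Real.logb 2) Q)) / trR P : ℝ) : EReal)
  else ⊤

def sandD (α : ℝ) (P Q : Matrix d d ℂ) : EReal :=
  if α = 1 then relEnt P Q
  else if (α < 1 ∧ P * Q ≠ 0) ∨ suppLE P Q then
    (((α - 1)⁻¹ * Real.logb 2
      (trR (mpow (mpow Q (-(α-1)/(2*α)) * P * mpow Q (-(α-1)/(2*α))) α) / trR P) : ℝ) : EReal)
  else ⊤

def Dmax (P Q : Matrix d d ℂ) : EReal :=
  sInf {x : EReal | ∃ l : ℝ, x = (l : EReal) ∧ MLE P ((2:ℝ) ^ l • Q)}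

def traceNorm (X : Matrix d d ℂ) : ℝ := trR (cfcM Real.sqrt (Xᴴ * X))

def genFid (ρ σ : Matrix d d ℂ) : ℝ :=
  (traceNorm (mpow ρ (1/2) * mpow σ (1/2)) + Real.sqrt ((1 - trR ρ) * (1 - trR σ)))^2

def purDist (ρ σ : Matrix d d ℂ) : ℝ := Real.sqrt (1 - genFid ρ σ)

def pBall (ε : ℝ) (ρ : Matrix d d ℂ) : Set (Matrix d d ℂ) :=
  {τ | τ.PosSemidef ∧ trR τ ≤ 1 ∧ purDist ρ τ ≤ ε}

def sDmax (ε : ℝ) (ρ η : Matrix d d ℂ) : EReal :=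
  sInf {x : EReal | ∃ τ ∈ pBall ε ρ, x = Dmax τ η}

/-- Sandwiched α-Rényi conditional entropy `H̃↑_α(A|B)` (supremum over σ_B). -/
def condSandUp (α : ℝ) (ρ : Matrix (dA × dB) (dA × dB) ℂ) : EReal :=
  sSup {x : EReal | ∃ σ : Matrix dB dB ℂ, IsState σ ∧
    x = - sandD α ρ ((1 : Matrix dA dA ℂ) ⊗ₖ σ)}

/-- Partial trace over the A system. -/
def ptrA (ρ : Matrix (dA × dB) (dA × dB) ℂ) : Matrix dB dB ℂ :=
  Matrix.of fun b b' => ∑ a : dA, ρ (a, b) (a, b')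

/-- Partial trace over the B system. -/
def ptrB (ρ : Matrix (dA × dB) (dA × dB) ℂ) : Matrix dA dA ℂ :=
  Matrix.of fun a a' => ∑ b : dB, ρ (a, b) (a', b)

/-- Sandwiched α-Rényi conditional entropy `H̃↓_α(A|B)`. -/
def condSandDown (α : ℝ) (ρ : Matrix (dA × dB) (dA × dB) ℂ) : EReal :=
  - sandD α ρ ((1 : Matrix dA dA ℂ) ⊗ₖ ptrA ρ)

/-- ε-smooth sandwiched α-Rényi conditional entropy. -/
def condSandUpSm (α ε : ℝ) (ρ : Matrix (dA × dB) (dA × dB) ℂ) : EReal :=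
  sSup {x : EReal | ∃ τ ∈ pBall ε ρ, x = condSandUp α τ}

/-- Min-entropy `H_min(A|B)`. -/
def Hmin (ρ : Matrix (dA × dB) (dA × dB) ℂ) : EReal :=
  sSup {x : EReal | ∃ l : ℝ, x = (l : EReal) ∧ ∃ σ : Matrix dB dB ℂ, IsState σ ∧
    MLE ρ ((2:ℝ) ^ (-l) • ((1 : Matrix dA dA ℂ) ⊗ₖ σ))}

/-- Smooth min-entropy `H^ε_min(A|B)`. -/
def HminSm (ε : ℝ) (ρ : Matrix (dA × dB) (dA × dB) ℂ) : EReal :=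
  sSup {x : EReal | ∃ τ ∈ pBall ε ρ, x = Hmin τ}

/-- von Neumann entropy (base 2). -/
def vN (ρ : Matrix d d ℂ) : ℝ := - trR (cfcM (fun x => x * Real.logb 2 x) ρ)

/-- von Neumann conditional entropy `H(A|B)`. -/
def vNCond (ρ : Matrix (dA × dB) (dA × dB) ℂ) : ℝ := vN ρ - vN (ptrA ρ)

def g0 (x : ℝ) : ℝ := - Real.logb 2 (1 - Real.sqrt (1 - x^2))

def g1 (x y : ℝ) : ℝ := g0 x - Real.logb 2 (1 - y^2)


/-- Geometric (Belavkin-Staszewski) relative entropy (base 2), for invertible σ. -/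
def geomRel (ρ σ : Matrix d d ℂ) : ℝ :=
  trR (ρ * cfcM (Real.logb 2) (mpow ρ (1/2) * σ⁻¹ * mpow ρ (1/2)))

/-!
A unit vector `ψ` makes `ρ = |ψ⟩⟨ψ|` a projection, so `ρ^{1/2} = ρ` and `ρ σ⁻¹ ρ = ⟨ψ|σ⁻¹|ψ⟩ ρ`;
the functional calculus sends a multiple `c • ρ` of a projection to `f c • ρ`, which evaluates
the geometric relative entropy. For `D_max`, the Schur complements of the block matrix
`[[σ, ψ], [ψ†, 1]]` with respect to its two diagonal blocks show that `ρ ≤ σ` iff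
`⟨ψ|σ⁻¹|ψ⟩ ≤ 1`.
-/

section IdempotentCFC

variable {A : Type*} [Ring A] [StarRing A] [Algebra ℝ A] [TopologicalSpace A]
  [ContinuousFunctionalCalculus ℝ A IsSelfAdjoint] [ContinuousMap.UniqueHom ℝ A]

theorem cfc_smul_of_isIdempotentElem {p : A} (hp : IsSelfAdjoint p) (hpp : IsIdempotentElem p)
    {f : ℝ → ℝ} (hf : f 0 = 0) (c : ℝ) : cfc f (c • p) = f c • p := by
  have hspec := hpp.spectrum_subset ℝ
  have hf_cont := ((Set.toFinite {0, 1}).subset hspec).image (c * ·) |>.continuousOn f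
  rw [← cfc_comp_const_mul c f p hf_cont, ← cfc_const_mul_id (f c) p]
  refine cfc_congr fun x hx => ?_
  rcases hspec hx with rfl | rfl <;> simp [hf]

end IdempotentCFC

theorem cfcM_eq_cfc {A : Matrix d d ℂ} (hA : A.IsHermitian) (f : ℝ → ℝ) :
    cfcM f A = cfc f A := by
  rw [cfcM, dif_pos hA, hA.cfc_eq]

theorem cfcM_smul_of_isIdempotentElem {P : Matrix d d ℂ} (hP : P.IsHermitian)
    (hPP : IsIdempotentElem P) {f : ℝ → ℝ} (hf : f 0 = 0) (c : ℝ) :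
    cfcM f (c • P) = f c • P := by
  rw [cfcM_eq_cfc (hP.smul (IsSelfAdjoint.all c)), cfc_smul_of_isIdempotentElem hP hPP hf]

section RankOne

variable {𝕜 : Type*} [RCLike 𝕜]

omit [DecidableEq d] in
theorem isIdempotentElem_vecMulVec_star {ψ : d → 𝕜} (hψ : star ψ ⬝ᵥ ψ = 1) :
    IsIdempotentElem (vecMulVec ψ (star ψ)) := by
  rw [IsIdempotentElem, vecMulVec_mul_vecMulVec, hψ, one_smul]

omit [DecidableEq d] in
theorem vecMulVec_star_mul_mul_vecMulVec_star (ψ : d → 𝕜) (B : Matrix d d 𝕜) :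
    vecMulVec ψ (star ψ) * B * vecMulVec ψ (star ψ) =
      (star ψ ⬝ᵥ B *ᵥ ψ) • vecMulVec ψ (star ψ) := by
  rw [vecMulVec_mul, vecMulVec_mul_vecMulVec, ← dotProduct_mulVec, vecMulVec_smul]

omit [DecidableEq d] in
theorem Matrix.IsHermitian.ofReal_re_star_dotProduct_mulVec_self {A : Matrix d d 𝕜}
    (hA : A.IsHermitian) (x : d → 𝕜) :
    ((RCLike.re (star x ⬝ᵥ A *ᵥ x) : ℝ) : 𝕜) = star x ⬝ᵥ A *ᵥ x :=
  RCLike.ext (by simp) (by simp [hA.im_star_dotProduct_mulVec_self])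

theorem posSemidef_sub_vecMulVec_star_iff {σ : Matrix d d 𝕜} (hσ : σ.PosDef) (ψ : d → 𝕜) :
    (σ - vecMulVec ψ (star ψ)).PosSemidef ↔ star ψ ⬝ᵥ σ⁻¹ *ᵥ ψ ≤ 1 := by
  let := hσ.isUnit.invertible
  let : Invertible (1 : Matrix Unit Unit 𝕜) := invertibleOne
  let B : Matrix d Unit 𝕜 := replicateCol Unit ψ
  have hBB : B * (1 : Matrix Unit Unit 𝕜)⁻¹ * Bᴴ = vecMulVec ψ (star ψ) := by
    rw [inv_one, Matrix.mul_one, conjTranspose_replicateCol, vecMulVec_eq Unit]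
  have hschur : 1 - Bᴴ * σ⁻¹ * B = diagonal fun _ => 1 - star ψ ⬝ᵥ σ⁻¹ *ᵥ ψ := by
    ext ⟨⟩ ⟨⟩
    rw [Matrix.sub_apply, one_apply_eq, diagonal_apply_eq, conjTranspose_replicateCol,
      ← replicateRow_vecMul, replicateRow_mul_replicateCol_apply, dotProduct_mulVec]
  rw [← hBB, ← PosDef.fromBlocks₂₂ σ B PosDef.one, PosDef.fromBlocks₁₁ B 1 hσ, hschur,
    posSemidef_diagonal_iff]
  simp

end RankOne

theorem geomRel_vecMulVec_star {ψ : d → ℂ} (hψ : star ψ ⬝ᵥ ψ = 1) {σ : Matrix d d ℂ}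
    (hσ : σ.IsHermitian) :
    geomRel (vecMulVec ψ (star ψ)) σ = Real.logb 2 (star ψ ⬝ᵥ σ⁻¹ *ᵥ ψ).re := by
  set ρ := vecMulVec ψ (star ψ)
  have hρ : ρ.IsHermitian := (posSemidef_vecMulVec_self_star ψ).isHermitian
  have hρρ : IsIdempotentElem ρ := isIdempotentElem_vecMulVec_star hψ
  have hsqrt : mpow ρ (1 / 2) = ρ := by
    simpa [mpow] using cfcM_smul_of_isIdempotentElem hρ hρρ (f := fun x => x ^ (1 / 2 : ℝ))
      (by simp) 1
  obtain ⟨z, hz⟩ : ∃ z : ℝ, star ψ ⬝ᵥ σ⁻¹ *ᵥ ψ = z :=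
    ⟨_, (hσ.inv.ofReal_re_star_dotProduct_mulVec_self ψ).symm⟩
  have htr : trR ρ = 1 := by
    rw [trR, trace_vecMulVec, dotProduct_comm, hψ, Complex.one_re]
  rw [hz, Complex.ofReal_re]
  calc geomRel ρ σ = trR (ρ * cfcM (Real.logb 2) (z • ρ)) := by
        rw [geomRel, hsqrt, vecMulVec_star_mul_mul_vecMulVec_star, hz, Complex.coe_smul]
    _ = Real.logb 2 z := by
        rw [cfcM_smul_of_isIdempotentElem hρ hρρ Real.logb_zero, mul_smul_comm, hρρ.eq, trR,
          trace_smul, Complex.real_smul, Complex.re_ofReal_mul, ← trR, htr, mul_one]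

theorem MLE_vecMulVec_star_smul_iff {σ : Matrix d d ℂ} (hσ : σ.PosDef) (ψ : d → ℂ) {t : ℝ}
    (ht : 0 < t) : MLE (vecMulVec ψ (star ψ)) (t • σ) ↔ (star ψ ⬝ᵥ σ⁻¹ *ᵥ ψ).re ≤ t := by
  obtain ⟨z, hz⟩ : ∃ z : ℝ, star ψ ⬝ᵥ σ⁻¹ *ᵥ ψ = z :=
    ⟨_, (hσ.isHermitian.inv.ofReal_re_star_dotProduct_mulVec_self ψ).symm⟩
  have hinv : (t • σ)⁻¹ = (t⁻¹ : ℂ) • σ⁻¹ := by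
    have ht' : (t : ℂ) ≠ 0 := mod_cast ht.ne'
    rw [← Complex.coe_smul, ← Units.val_mk0 ht', ← Units.val_inv_eq_inv_val, ← Units.smul_def,
      ← Units.smul_def]
    exact inv_smul' σ _ ((isUnit_iff_isUnit_det σ).1 hσ.isUnit)
  rw [MLE, posSemidef_sub_vecMulVec_star_iff (hσ.smul ht), hinv, smul_mulVec, dotProduct_smul,
    hz, smul_eq_mul, ← Complex.ofReal_inv, ← Complex.ofReal_mul, Complex.ofReal_re,
    ← Complex.ofReal_one, Complex.real_le_real, inv_mul_le_iff₀ ht, mul_one]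

omit [Fintype d] [DecidableEq d] in
theorem Dmax_eq_of_forall_MLE_iff {P Q : Matrix d d ℂ} {a : ℝ}
    (h : ∀ l : ℝ, MLE P ((2 : ℝ) ^ l • Q) ↔ a ≤ l) : Dmax P Q = a :=
  le_antisymm (sInf_le ⟨a, rfl, (h a).2 le_rfl⟩) <|
    le_sInf fun _ ⟨l, hx, hl⟩ => hx ▸ EReal.coe_le_coe_iff.2 ((h l).1 hl)

theorem Dmax_vecMulVec_star {ψ : d → ℂ} (hψ : ψ ≠ 0) {σ : Matrix d d ℂ} (hσ : σ.PosDef) :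
    Dmax (vecMulVec ψ (star ψ)) σ = Real.logb 2 (star ψ ⬝ᵥ σ⁻¹ *ᵥ ψ).re := by
  have hz : 0 < (star ψ ⬝ᵥ σ⁻¹ *ᵥ ψ).re :=
    (Complex.pos_iff.1 (hσ.inv.dotProduct_mulVec_pos hψ)).1
  refine Dmax_eq_of_forall_MLE_iff fun l => ?_
  rw [MLE_vecMulVec_star_smul_iff hσ ψ (by positivity), Real.logb_le_iff_le_rpow one_lt_two hz]

theorem geomRel_pure_eq_Dmax_general {d : Type*} [Fintype d] [DecidableEq d]
    (ψ : d → ℂ) (hψ : star ψ ⬝ᵥ ψ = 1)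
    (σ : Matrix d d ℂ) (hσ : σ.PosDef) :
    geomRel (Matrix.vecMulVec ψ (star ψ)) σ =
        Real.logb 2 (star ψ ⬝ᵥ σ⁻¹.mulVec ψ).re ∧
      Dmax (Matrix.vecMulVec ψ (star ψ)) σ =
        ((Real.logb 2 (star ψ ⬝ᵥ σ⁻¹.mulVec ψ).re : ℝ) : EReal) := by
  have hψ0 : ψ ≠ 0 := by
    rintro rfl
    simp at hψ
  exact ⟨geomRel_vecMulVec_star hψ hσ.isHermitian, Dmax_vecMulVec_star hψ0 hσ⟩

/-- Lemma B.2: for a pure state, the geometric relative entropy and the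
max-relative entropy coincide and equal `log ⟨ψ|σ⁻¹|ψ⟩`. -/
theorem geomRel_pure_eq_Dmax {d : Type*} [Fintype d] [DecidableEq d]
    (ψ : d → ℂ) (hψ : star ψ ⬝ᵥ ψ = 1)
    (σ : Matrix d d ℂ) (hσ : σ.PosDef) (hσ1 : trR σ = 1) :
    geomRel (Matrix.vecMulVec ψ (star ψ)) σ =
        Real.logb 2 (star ψ ⬝ᵥ σ⁻¹.mulVec ψ).re ∧
      Dmax (Matrix.vecMulVec ψ (star ψ)) σ =
        ((Real.logb 2 (star ψ ⬝ᵥ σ⁻¹.mulVec ψ).re : ℝ) : EReal) :=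
  geomRel_pure_eq_Dmax_general ψ hψ σ hσ
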